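/- The asymptotic efficiency AE(x) = (1 - 2α)·t_α(x)/f_X(x) satisfies AE(x) ≤ 1 for all x with f_X(x) > 0 and all α ∈ [0, 1/2), and AE(x) = 1 when α = 0. -/

import Mathlib

open Finset Filter Topology

/-!
By the binomial theorem the densities at `x` of the `n` order statistics sum to `n f(x)`.
Discarding the `⌊nα⌋` outer indices on each side only decreases the (nonnegative) sum,
so the trimmed average is at most `n f(x) / (n - 2⌊nα⌋) → f(x) / (1 - 2α)`.
For `α = 0` nothing is discarded and the average is exactly `f(x)`.
-/

/-- The density at `x` of the `i`-th of `n` order statistics, where `p = F(x)` and `d = f(x)`. -/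
def orderStatDensity (n i : ℕ) (p d : ℝ) : ℝ :=
  (n : ℝ) * ((n - 1).choose (i - 1) : ℝ) * p ^ (i - 1) * (1 - p) ^ (n - i) * d

lemma sum_Icc_mul_choose_mul_pow_mul_pow (p q : ℝ) (n : ℕ) :
    ∑ i ∈ Icc 1 n, (n : ℝ) * ((n - 1).choose (i - 1) : ℝ) * p ^ (i - 1) * q ^ (n - i)
      = n * (p + q) ^ (n - 1) := by
  rcases n with _ | m
  · simp
  rw [← Ico_add_one_right_eq_Icc, sum_Ico_eq_sum_range, Nat.add_sub_cancel, add_pow,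
    Nat.add_sub_cancel, mul_sum]
  refine sum_congr rfl fun j _ => ?_
  rw [show 1 + j - 1 = j by omega, show m + 1 - (1 + j) = m - j by omega]
  ring

lemma sum_Icc_orderStatDensity (n : ℕ) (p d : ℝ) :
    ∑ i ∈ Icc 1 n, orderStatDensity n i p d = n * d := by
  simp only [orderStatDensity, ← sum_mul, sum_Icc_mul_choose_mul_pow_mul_pow, add_sub_cancel,
    one_pow, mul_one]

lemma orderStatDensity_nonneg (n i : ℕ) {p d : ℝ} (hp : 0 ≤ p ∧ p ≤ 1) (hd : 0 ≤ d) :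
    0 ≤ orderStatDensity n i p d := by
  unfold orderStatDensity
  have := pow_nonneg (sub_nonneg.mpr hp.2) (n - i)
  have := pow_nonneg hp.1 (i - 1)
  positivity

lemma sum_Icc_trimmed_orderStatDensity_le (n k : ℕ) {p d : ℝ} (hp : 0 ≤ p ∧ p ≤ 1)
    (hd : 0 ≤ d) : ∑ i ∈ Icc (k + 1) (n - k), orderStatDensity n i p d ≤ n * d := by
  rw [← sum_Icc_orderStatDensity n p d]
  exact sum_le_sum_of_subset_of_nonneg (Icc_subset_Icc (by omega) (by omega))
    fun i _ _ => orderStatDensity_nonneg n i hp hd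

lemma tendsto_natFloor_mul_div_natCast {α : ℝ} (hα : 0 ≤ α) :
    Tendsto (fun n : ℕ => (⌊(n : ℝ) * α⌋₊ : ℝ) / n) atTop (𝓝 α) := by
  simpa only [mul_comm α, Function.comp_def] using
    (tendsto_nat_floor_mul_div_atTop hα).comp tendsto_natCast_atTop_atTop

lemma tendsto_natCast_div_sub_two_mul_natFloor {α : ℝ} (hα : 0 ≤ α ∧ α < 1 / 2) :
    Tendsto (fun n : ℕ => (n : ℝ) / (n - 2 * ⌊(n : ℝ) * α⌋₊)) atTop (𝓝 (1 - 2 * α)⁻¹) := by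
  have hlim : Tendsto (fun n : ℕ => 1 - 2 * ((⌊(n : ℝ) * α⌋₊ : ℝ) / n)) atTop
      (𝓝 (1 - 2 * α)) :=
    tendsto_const_nhds.sub ((tendsto_natFloor_mul_div_natCast hα.1).const_mul 2)
  refine (hlim.inv₀ (by linarith)).congr' ?_
  filter_upwards [eventually_ne_atTop 0] with n hn
  have : (n : ℝ) ≠ 0 := Nat.cast_ne_zero.mpr hn
  field_simp

lemma trimmed_mean_orderStatDensity_le {n k : ℕ} (hk : 2 * k ≤ n) {p d : ℝ}
    (hp : 0 ≤ p ∧ p ≤ 1) (hd : 0 ≤ d) :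
    1 / ((n : ℝ) - 2 * k) * ∑ i ∈ Icc (k + 1) (n - k), orderStatDensity n i p d
      ≤ n / (n - 2 * k) * d := by
  have hden : (0 : ℝ) ≤ n - 2 * k := by
    rw [sub_nonneg]
    exact_mod_cast hk
  calc _ ≤ 1 / ((n : ℝ) - 2 * k) * (n * d) :=
        mul_le_mul_of_nonneg_left (sum_Icc_trimmed_orderStatDensity_le n k hp hd)
          (one_div_nonneg.mpr hden)
    _ = _ := by ring

lemma mean_orderStatDensity {n : ℕ} (hn : n ≠ 0) (p d : ℝ) :
    1 / (n : ℝ) * ∑ i ∈ Icc 1 n, orderStatDensity n i p d = d := by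
  rw [sum_Icc_orderStatDensity, one_div_mul_eq_div,
    mul_div_cancel_left₀ d (Nat.cast_ne_zero.mpr hn)]

lemma two_mul_natFloor_mul_le {α : ℝ} (hα : 0 ≤ α ∧ α < 1 / 2) (n : ℕ) :
    2 * ⌊(n : ℝ) * α⌋₊ ≤ n := by
  have h := Nat.floor_le (mul_nonneg n.cast_nonneg hα.1)
  have : (2 * ⌊(n : ℝ) * α⌋₊ : ℝ) ≤ n := by nlinarith [(n.cast_nonneg : (0 : ℝ) ≤ n)]
  exact_mod_cast this

/-- The asymptotic efficiency `AE(x) = (1-2α) t_α(x) / f_X(x)` satisfies `AE(x) ≤ 1`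
for all `x` with `f_X(x) > 0` and all `α ∈ [0, 1/2)`, and `AE(x) = 1` when `α = 0`. -/
theorem asymptotic_efficiency_le_one (α : ℝ) (hα : 0 ≤ α ∧ α < 1 / 2)
    (F f : ℝ → ℝ) (x : ℝ) (hF : 0 ≤ F x ∧ F x ≤ 1) (hf : 0 < f x) (t : ℝ)
    (ht : Tendsto (fun n : ℕ =>
        (1 / ((n : ℝ) - 2 * (⌊(n : ℝ) * α⌋₊ : ℝ))) *
          ∑ i ∈ Finset.Icc (⌊(n : ℝ) * α⌋₊ + 1) (n - ⌊(n : ℝ) * α⌋₊),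
            (n : ℝ) * ((n - 1).choose (i - 1) : ℝ) * F x ^ (i - 1) * (1 - F x) ^ (n - i) * f x)
      atTop (𝓝 t)) :
    (1 - 2 * α) * t / f x ≤ 1 ∧ (α = 0 → (1 - 2 * α) * t / f x = 1) := by
  have ht_le : t ≤ (1 - 2 * α)⁻¹ * f x :=
    le_of_tendsto_of_tendsto' ht ((tendsto_natCast_div_sub_two_mul_natFloor hα).mul_const _)
      fun n => trimmed_mean_orderStatDensity_le (two_mul_natFloor_mul_le hα n) hF hf.le
  refine ⟨(div_le_one hf).mpr ((le_inv_mul_iff₀ (by linarith)).mp ht_le), fun hα0 => ?_⟩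
  subst hα0
  simp only [mul_zero, Nat.floor_zero, Nat.cast_zero, sub_zero, zero_add, Nat.sub_zero] at ht
  have hconst := (eventually_ne_atTop 0).mono fun n hn =>
    (mean_orderStatDensity hn (F x) (f x)).symm
  rw [tendsto_nhds_unique ht (tendsto_const_nhds.congr' hconst)]
  simp [hf.ne']
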